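/- Let α be a nonempty finite type and let μ be a probability distribution on α × Bool × Bool with coordinate random variables A, X, Y. Assume (i) P(A=a) > 0 for every a ∈ α, (ii) A and Y are conditionally independent given X, (iii) X and Y are not independent, and (iv) P(Y=1|X=0) = 0. Then P(Y=1) ≤ P(X=1) ≤ P(Y=1) / (max_a P(Y=1|A=a)), and max_a P(Y=1|A=a) > 0. (Corollary 1: refinement under the unidirectional-error assumption (A1).) -/

import Mathlib

open Classical in
/-- Probability of an event `E` under a finitely supported distribution `μ`. -/
noncomputable def pr {Ω : Type*} [Fintype Ω] (μ : Ω → ℝ) (E : Ω → Prop) : ℝ :=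
  ∑ ω, if E ω then μ ω else 0

/-- Conditional probability `P(E | F) = P(E ∧ F) / P(F)`. -/
noncomputable def cpr {Ω : Type*} [Fintype Ω] (μ : Ω → ℝ) (E F : Ω → Prop) : ℝ :=
  pr μ (fun ω => E ω ∧ F ω) / pr μ F

/-!
Non-independence of `X` and `Y` forces both values of `X` and the value `Y = 1` to have positive
probability. Since `P(Y=1 | X=0) = 0`, the event `Y = 1` lies in `X = 1` up to a null set, which
gives `P(Y=1) ≤ P(X=1)`. Conditional independence given `X = 1` then yields, for every `a`,
`P(Y=1, A=a) = P(A=a, X=1) · P(Y=1 | X=1) ≤ P(A=a) · P(Y=1) / P(X=1)`, i.e.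
`P(Y=1 | A=a) ≤ P(Y=1) / P(X=1)`; taking the maximum over `a` gives the upper bound.
-/

section pr

variable {Ω : Type*} [Fintype Ω] {μ : Ω → ℝ}

theorem pr_congr {E F : Ω → Prop} (h : ∀ ω, E ω ↔ F ω) : pr μ E = pr μ F := by
  rw [funext fun ω => propext (h ω)]

theorem pr_nonneg (hnn : ∀ ω, 0 ≤ μ ω) (E : Ω → Prop) : 0 ≤ pr μ E :=
  Finset.sum_nonneg fun ω _ => by split_ifs <;> simp [hnn ω]

theorem pr_mono (hnn : ∀ ω, 0 ≤ μ ω) {E F : Ω → Prop} (h : ∀ ω, E ω → F ω) :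
    pr μ E ≤ pr μ F :=
  Finset.sum_le_sum fun ω _ => by
    by_cases hE : E ω
    · simp [hE, h ω hE]
    · by_cases hF : F ω <;> simp [hE, hF, hnn ω]

theorem pr_eq_zero_of_imp (hnn : ∀ ω, 0 ≤ μ ω) {E F : Ω → Prop} (h : ∀ ω, E ω → F ω)
    (hF : pr μ F = 0) : pr μ E = 0 :=
  le_antisymm (hF ▸ pr_mono hnn h) (pr_nonneg hnn E)

theorem le_pr (hnn : ∀ ω, 0 ≤ μ ω) {E : Ω → Prop} {ω : Ω} (h : E ω) : μ ω ≤ pr μ E := by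
  classical
  calc μ ω = if E ω then μ ω else 0 := (if_pos h).symm
    _ ≤ pr μ E := Finset.single_le_sum (f := fun ω => if E ω then μ ω else 0)
        (fun ω _ => by split_ifs <;> simp [hnn ω]) (Finset.mem_univ ω)

theorem exists_pos_of_pr_pos {E : Ω → Prop} (hE : 0 < pr μ E) : ∃ ω, E ω ∧ 0 < μ ω := by
  by_contra! h
  exact hE.not_ge <| Finset.sum_nonpos fun ω _ => by split_ifs with hω <;> simp [h ω, hω]

theorem pr_eq_pr_and_add_pr_and_not (E F : Ω → Prop) :
    pr μ E = pr μ (fun ω => E ω ∧ F ω) + pr μ (fun ω => E ω ∧ ¬F ω) := by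
  simp only [pr, ← Finset.sum_add_distrib]
  refine Finset.sum_congr rfl fun ω _ => ?_
  by_cases hE : E ω <;> by_cases hF : F ω <;> simp [hE, hF]

theorem pr_add_pr_not (hsum : ∑ ω, μ ω = 1) (F : Ω → Prop) :
    pr μ F + pr μ (fun ω => ¬F ω) = 1 := by
  have h := pr_eq_pr_and_add_pr_and_not (μ := μ) (fun _ => True) F
  simp only [true_and] at h
  rw [← h]
  simpa [pr] using hsum

theorem pr_and_eq_of_pr_and_not_eq_zero {E F : Ω → Prop}
    (h : pr μ (fun ω => E ω ∧ ¬F ω) = 0) : pr μ (fun ω => E ω ∧ F ω) = pr μ E := by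
  rw [pr_eq_pr_and_add_pr_and_not E F, h, add_zero]

theorem pr_le_of_pr_and_not_eq_zero (hnn : ∀ ω, 0 ≤ μ ω) {E F : Ω → Prop}
    (h : pr μ (fun ω => E ω ∧ ¬F ω) = 0) : pr μ E ≤ pr μ F :=
  pr_and_eq_of_pr_and_not_eq_zero h ▸ pr_mono hnn fun _ h => h.2

theorem pr_and_eq_mul_of_pr_eq_zero (hnn : ∀ ω, 0 ≤ μ ω) {E F : Ω → Prop}
    (hE : pr μ E = 0) : pr μ (fun ω => E ω ∧ F ω) = pr μ E * pr μ F := by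
  rw [hE, zero_mul]
  exact pr_eq_zero_of_imp hnn (fun _ h => h.1) hE

theorem pr_and_eq_mul_of_pr_not_eq_zero (hnn : ∀ ω, 0 ≤ μ ω) (hsum : ∑ ω, μ ω = 1)
    {E F : Ω → Prop} (hE : pr μ (fun ω => ¬E ω) = 0) :
    pr μ (fun ω => E ω ∧ F ω) = pr μ E * pr μ F := by
  have hE1 : pr μ E = 1 := by linarith [pr_add_pr_not hsum E]
  have hFE : pr μ (fun ω => F ω ∧ ¬E ω) = 0 := pr_eq_zero_of_imp hnn (fun _ h => h.2) hE
  rw [hE1, one_mul, ← pr_and_eq_of_pr_and_not_eq_zero hFE]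
  exact pr_congr fun _ => and_comm

theorem cpr_nonneg (hnn : ∀ ω, 0 ≤ μ ω) (E F : Ω → Prop) : 0 ≤ cpr μ E F :=
  div_nonneg (pr_nonneg hnn _) (pr_nonneg hnn _)

theorem exists_cpr_pos (hnn : ∀ ω, 0 ≤ μ ω) {β : Type*} (f : Ω → β) {E : Ω → Prop}
    (hE : 0 < pr μ E) : ∃ b, 0 < cpr μ E (fun ω => f ω = b) := by
  obtain ⟨ω, hω, hμ⟩ := exists_pos_of_pr_pos hE
  have hpos : 0 < pr μ (fun ω' => E ω' ∧ f ω' = f ω) := hμ.trans_le (le_pr hnn ⟨hω, rfl⟩)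
  exact ⟨f ω, div_pos hpos (hpos.trans_le (pr_mono hnn fun _ h => h.2))⟩

theorem pr_pos_of_not_indep (hnn : ∀ ω, 0 ≤ μ ω) (hsum : ∑ ω, μ ω = 1) {β : Type*}
    {X : Ω → Bool} {Y : Ω → β}
    (hdep : ¬ ∀ x y, pr μ (fun ω => X ω = x ∧ Y ω = y) =
      pr μ (fun ω => X ω = x) * pr μ (fun ω => Y ω = y))
    (x : Bool) : 0 < pr μ (fun ω => X ω = x) := by
  -- Otherwise every event `{X = x'}` is null or conull, hence independent of `Y`.
  by_contra! h
  have h0 : pr μ (fun ω => X ω = x) = 0 := le_antisymm h (pr_nonneg hnn _)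
  refine hdep fun x' y => ?_
  by_cases hx : x' = x
  · subst hx
    exact pr_and_eq_mul_of_pr_eq_zero hnn h0
  · refine pr_and_eq_mul_of_pr_not_eq_zero hnn hsum (h0 ▸ pr_congr fun ω => ?_)
    revert hx
    cases X ω <;> cases x <;> cases x' <;> decide

theorem pr_pos_of_not_indep_right (hnn : ∀ ω, 0 ≤ μ ω) (hsum : ∑ ω, μ ω = 1) {β : Type*}
    {X : Ω → β} {Y : Ω → Bool}
    (hdep : ¬ ∀ x y, pr μ (fun ω => X ω = x ∧ Y ω = y) =
      pr μ (fun ω => X ω = x) * pr μ (fun ω => Y ω = y))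
    (y : Bool) : 0 < pr μ (fun ω => Y ω = y) := by
  refine pr_pos_of_not_indep hnn hsum (X := Y) (Y := X) (fun h => hdep fun x y => ?_) y
  rw [mul_comm, ← h y x]
  exact pr_congr fun _ => and_comm

theorem cpr_le_cpr_of_condIndep (hnn : ∀ ω, 0 ≤ μ ω) {A Y X : Ω → Prop} (hX : 0 < pr μ X)
    (hYX : pr μ (fun ω => Y ω ∧ ¬X ω) = 0)
    (hCI : cpr μ (fun ω => A ω ∧ Y ω) X = cpr μ A X * cpr μ Y X) :
    cpr μ Y A ≤ cpr μ Y X := by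
  refine div_le_of_le_mul₀ (pr_nonneg hnn A) (cpr_nonneg hnn Y X) ?_
  have hYAX : pr μ (fun ω => (Y ω ∧ A ω) ∧ ¬X ω) = 0 :=
    pr_eq_zero_of_imp hnn (fun _ h => ⟨h.1.1, h.2⟩) hYX
  calc pr μ (fun ω => Y ω ∧ A ω)
      = pr μ (fun ω => (A ω ∧ Y ω) ∧ X ω) := by
        rw [← pr_and_eq_of_pr_and_not_eq_zero hYAX]
        exact pr_congr fun _ => by tauto
    _ = cpr μ (fun ω => A ω ∧ Y ω) X * pr μ X := (div_mul_cancel₀ _ hX.ne').symm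
    _ = pr μ (fun ω => A ω ∧ X ω) * cpr μ Y X := by
        rw [hCI, cpr]
        field_simp
    _ ≤ cpr μ Y X * pr μ A := by
        rw [mul_comm]
        exact mul_le_mul_of_nonneg_left (pr_mono hnn fun _ h => h.1) (cpr_nonneg hnn Y X)

end pr

theorem stmt2_general {α : Type*} [Fintype α] [Nonempty α]
    (μ : α × Bool × Bool → ℝ)
    (hnn : ∀ ω, 0 ≤ μ ω) (hsum : ∑ ω, μ ω = 1)
    (hCI : ∀ (a : α) (y x : Bool), 0 < pr μ (fun ω => ω.2.1 = x) →
      cpr μ (fun ω => ω.1 = a ∧ ω.2.2 = y) (fun ω => ω.2.1 = x) =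
        cpr μ (fun ω => ω.1 = a) (fun ω => ω.2.1 = x) *
          cpr μ (fun ω => ω.2.2 = y) (fun ω => ω.2.1 = x))
    (hdep : ¬ ∀ x y : Bool,
      pr μ (fun ω => ω.2.1 = x ∧ ω.2.2 = y) =
        pr μ (fun ω => ω.2.1 = x) * pr μ (fun ω => ω.2.2 = y))
    (hA1 : cpr μ (fun ω => ω.2.2 = true) (fun ω => ω.2.1 = false) = 0) :
    pr μ (fun ω => ω.2.2 = true) ≤ pr μ (fun ω => ω.2.1 = true) ∧
    pr μ (fun ω => ω.2.1 = true) ≤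
      pr μ (fun ω => ω.2.2 = true) /
        Finset.univ.sup' Finset.univ_nonempty
          (fun a : α => cpr μ (fun ω => ω.2.2 = true) (fun ω => ω.1 = a)) ∧
    0 < Finset.univ.sup' Finset.univ_nonempty
          (fun a : α => cpr μ (fun ω => ω.2.2 = true) (fun ω => ω.1 = a)) := by
  have hX : ∀ x, 0 < pr μ (fun ω => ω.2.1 = x) := pr_pos_of_not_indep hnn hsum hdep
  have hY : 0 < pr μ (fun ω => ω.2.2 = true) := pr_pos_of_not_indep_right hnn hsum hdep true
  have hYX : pr μ (fun ω => ω.2.2 = true ∧ ¬ω.2.1 = true) = 0 := by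
    simpa [cpr, (hX false).ne'] using hA1
  have hcpr : cpr μ (fun ω => ω.2.2 = true) (fun ω => ω.2.1 = true) =
      pr μ (fun ω => ω.2.2 = true) / pr μ (fun ω => ω.2.1 = true) := by
    rw [cpr, pr_and_eq_of_pr_and_not_eq_zero hYX]
  have hbound : Finset.univ.sup' Finset.univ_nonempty
      (fun a : α => cpr μ (fun ω => ω.2.2 = true) (fun ω => ω.1 = a)) ≤
        pr μ (fun ω => ω.2.2 = true) / pr μ (fun ω => ω.2.1 = true) :=
    Finset.sup'_le _ _ fun a _ => hcpr ▸
      cpr_le_cpr_of_condIndep hnn (hX true) hYX (hCI a true true (hX true))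
  have hM : 0 < Finset.univ.sup' Finset.univ_nonempty
      (fun a : α => cpr μ (fun ω => ω.2.2 = true) (fun ω => ω.1 = a)) := by
    obtain ⟨a, ha⟩ := exists_cpr_pos hnn Prod.fst hY
    exact (Finset.lt_sup'_iff _).2 ⟨a, Finset.mem_univ a, ha⟩
  refine ⟨pr_le_of_pr_and_not_eq_zero hnn hYX, (le_div_iff₀ hM).2 ?_, hM⟩
  calc _ ≤ pr μ (fun ω => ω.2.1 = true) *
        (pr μ (fun ω => ω.2.2 = true) / pr μ (fun ω => ω.2.1 = true)) :=
        mul_le_mul_of_nonneg_left hbound (hX true).le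
    _ = pr μ (fun ω => ω.2.2 = true) := mul_div_cancel₀ _ (hX true).ne'

/-- Corollary 1: refinement under the unidirectional-error assumption (A1). -/
theorem stmt2 {α : Type*} [Fintype α] [Nonempty α]
    (μ : α × Bool × Bool → ℝ)
    (hnn : ∀ ω, 0 ≤ μ ω) (hsum : ∑ ω, μ ω = 1)
    (hA : ∀ a : α, 0 < pr μ (fun ω => ω.1 = a))
    (hCI : ∀ (a : α) (y x : Bool), 0 < pr μ (fun ω => ω.2.1 = x) →
      cpr μ (fun ω => ω.1 = a ∧ ω.2.2 = y) (fun ω => ω.2.1 = x) =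
        cpr μ (fun ω => ω.1 = a) (fun ω => ω.2.1 = x) *
          cpr μ (fun ω => ω.2.2 = y) (fun ω => ω.2.1 = x))
    (hdep : ¬ ∀ x y : Bool,
      pr μ (fun ω => ω.2.1 = x ∧ ω.2.2 = y) =
        pr μ (fun ω => ω.2.1 = x) * pr μ (fun ω => ω.2.2 = y))
    (hA1 : cpr μ (fun ω => ω.2.2 = true) (fun ω => ω.2.1 = false) = 0) :
    pr μ (fun ω => ω.2.2 = true) ≤ pr μ (fun ω => ω.2.1 = true) ∧
    pr μ (fun ω => ω.2.1 = true) ≤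
      pr μ (fun ω => ω.2.2 = true) /
        Finset.univ.sup' Finset.univ_nonempty
          (fun a : α => cpr μ (fun ω => ω.2.2 = true) (fun ω => ω.1 = a)) ∧
    0 < Finset.univ.sup' Finset.univ_nonempty
          (fun a : α => cpr μ (fun ω => ω.2.2 = true) (fun ω => ω.1 = a)) :=
  stmt2_general μ hnn hsum hCI hdep hA1
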